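/- arXiv:2508.15399 — 2 statements merged into one kernel-verified Lean document; each statement's English description precedes it below -/
import Mathlib

section
/- If B is a 3×3 matrix with det B = 1, tr B = p, tr(adj B) = q, and A = B², with tr A = a and tr(adj A) = b, then p satisfies the quartic equation p⁴ - 2a p² - 8p + a² - 4b = 0. -/
/-- If `B` is a 3×3 complex matrix with `det B = 1` and `A = B²`, then
`p = tr B` satisfies `p⁴ - 2a p² - 8p + a² - 4b = 0`, where `a = tr A`
and `b = tr (adj A)`. -/
theorem trace_quartic (A B : Matrix (Fin 3) (Fin 3) ℂ)
    (hB : B.det = 1) (hBA : A = B ^ 2) :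
    B.trace ^ 4 - 2 * A.trace * B.trace ^ 2 - 8 * B.trace +
      A.trace ^ 2 - 4 * A.adjugate.trace = 0 := by
  subst hBA
  rw [Matrix.det_fin_three] at hB
  simp only [pow_two, Matrix.adjugate_fin_three, Matrix.trace_fin_three,
    Matrix.mul_apply, Fin.sum_univ_three, Matrix.cons_val', Matrix.cons_val_zero,
    Matrix.cons_val_one, Matrix.head_cons, Matrix.empty_val',
    Matrix.cons_val_fin_one, Matrix.head_fin_const, Matrix.cons_val_two,
    Matrix.tail_cons, Matrix.of_apply]
  linear_combination (8 * (B 0 0 + B 1 1 + B 2 2)) * hB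
end

section
/- Let B ∈ M₂(𝔽_p) with B³ = A, and suppose (tr B)² - det B ≠ 0. Then B = (A + (tr B)(det B)·I) / ((tr B)² - det B), where moreover (det B)³ = det A and (tr B)³ - 3(det B)(tr B) = tr A. -/
open Matrix

lemma ch2 {R : Type*} [CommRing R] (B : Matrix (Fin 2) (Fin 2) R) :
    B ^ 2 = B.trace • B - B.det • (1 : Matrix (Fin 2) (Fin 2) R) := by
  ext i j
  simp [pow_two, Matrix.mul_apply, Matrix.trace_fin_two, Matrix.det_fin_two,
    Fin.sum_univ_two, Matrix.one_apply]
  fin_cases i <;> fin_cases j <;> simp <;> ring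

/-- If `B ∈ M₂(𝔽_p)` satisfies `B³ = A` and `(tr B)² - det B ≠ 0`, then
`B = ((tr B)² - det B)⁻¹ • (A + (tr B)(det B)·I)`, and moreover
`(det B)³ = det A` and `(tr B)³ - 3(det B)(tr B) = tr A`. -/
theorem cube_root_formula {p : ℕ} [Fact p.Prime]
    (A B : Matrix (Fin 2) (Fin 2) (ZMod p))
    (h : B ^ 3 = A) (hne : B.trace ^ 2 - B.det ≠ 0) :
    B = (B.trace ^ 2 - B.det)⁻¹ •
        (A + (B.trace * B.det) • (1 : Matrix (Fin 2) (Fin 2) (ZMod p))) ∧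
    B.det ^ 3 = A.det ∧
    B.trace ^ 3 - 3 * B.det * B.trace = A.trace := by
  have hA : A = (B.trace ^ 2 - B.det) • B -
      (B.trace * B.det) • (1 : Matrix (Fin 2) (Fin 2) (ZMod p)) := by
    rw [← h]
    have h3 : B ^ 3 = B * B ^ 2 := by rw [pow_succ, pow_two]; noncomm_ring
    rw [h3, ch2]
    rw [Matrix.mul_sub, Matrix.mul_smul, Matrix.mul_smul, Matrix.mul_one,
      ← pow_two, ch2]
    rw [smul_sub, smul_smul, smul_smul, sub_smul,
      show B.trace * B.trace = B.trace ^ 2 by ring]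
    abel
  refine ⟨?_, ?_, ?_⟩
  · rw [hA]
    rw [sub_add_cancel]
    rw [smul_smul, inv_mul_cancel₀ hne, one_smul]
  · rw [← h, Matrix.det_pow]
  · rw [← h]
    have : B ^ 3 = (B.trace ^ 2 - B.det) • B -
        (B.trace * B.det) • (1 : Matrix (Fin 2) (Fin 2) (ZMod p)) := by
      rw [h, hA]
    rw [this, Matrix.trace_sub, Matrix.trace_smul, Matrix.trace_smul,
      Matrix.trace_one]
    simp only [smul_eq_mul, Fintype.card_fin]
    push_cast
    ring
end
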